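/- arXiv:gr-qc/0201054 — 2 statements merged into one kernel-verified Lean document; each statement's English description precedes it below -/
import Mathlib

section
/- Let Σ be a rigged hypersurface with non-null rigging ℓ, rigged connection Γ and rigged metric connection Γ̃ (the Levi-Civita connection of γ_{ab} = ḡ_{ab} - ℓ_a ℓ_b/(ℓ·ℓ)). Then Γ̃ = Γ if and only if at each point p ∈ Σ either Ψ^a_b|_p = 0 or ℓ_a|_p = 0 (i.e. ℓ is proportional to the metric normal at p). -/
noncomputable section

/-- Partial derivative in the `a`-th coordinate direction on `ℝ³`. -/
def pd (f : (Fin 3 → ℝ) → ℝ) (a : Fin 3) (ξ : Fin 3 → ℝ) : ℝ :=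
  fderiv ℝ f ξ (Pi.single a 1)

/-- Ambient covariant derivative along `e a` of an ambient vector field along Σ. -/
def cov (Ch : (Fin 3 → ℝ) → Fin 4 → Fin 4 → Fin 4 → ℝ)
    (e : Fin 3 → (Fin 3 → ℝ) → Fin 4 → ℝ)
    (a : Fin 3) (V : (Fin 3 → ℝ) → Fin 4 → ℝ) (ξ : Fin 3 → ℝ) (μ : Fin 4) : ℝ :=
  pd (fun ζ => V ζ μ) a ξ + ∑ ν, ∑ ρ, Ch ξ μ ν ρ * e a ξ ν * V ξ ρ

/-- Christoffel symbols `Γ̄^c_{ba} = ω^c(∇_{e_a} e_b)` of the rigged connection. -/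
def Gbar (Ch : (Fin 3 → ℝ) → Fin 4 → Fin 4 → Fin 4 → ℝ)
    (e : Fin 3 → (Fin 3 → ℝ) → Fin 4 → ℝ)
    (ω : Fin 3 → (Fin 3 → ℝ) → Fin 4 → ℝ)
    (c b a : Fin 3) (ξ : Fin 3 → ℝ) : ℝ :=
  ∑ μ, ω c ξ μ * cov Ch e a (e b) ξ μ

/-- The shape tensor of the rigging, `Ψ^a_b = ω^a(∇_{e_b} ℓ)`. -/
def PsiF (Ch : (Fin 3 → ℝ) → Fin 4 → Fin 4 → Fin 4 → ℝ)
    (e : Fin 3 → (Fin 3 → ℝ) → Fin 4 → ℝ)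
    (ω : Fin 3 → (Fin 3 → ℝ) → Fin 4 → ℝ)
    (ℓ : (Fin 3 → ℝ) → Fin 4 → ℝ) (a b : Fin 3) (ξ : Fin 3 → ℝ) : ℝ :=
  ∑ μ, ω a ξ μ * cov Ch e b ℓ ξ μ

lemma pd_sum {ι : Type*} (s : Finset ι) (f : ι → (Fin 3 → ℝ) → ℝ) (a : Fin 3) {ξ : Fin 3 → ℝ}
    (h : ∀ i ∈ s, DifferentiableAt ℝ (f i) ξ) :
    pd (fun ζ => ∑ i ∈ s, f i ζ) a ξ = ∑ i ∈ s, pd (f i) a ξ := by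
  unfold pd
  rw [fderiv_fun_sum h]
  simp

lemma pd_mul {f h : (Fin 3 → ℝ) → ℝ} {ξ : Fin 3 → ℝ} (hf : DifferentiableAt ℝ f ξ)
    (hh : DifferentiableAt ℝ h ξ) (a : Fin 3) :
    pd (fun ζ => f ζ * h ζ) a ξ = pd f a ξ * h ξ + f ξ * pd h a ξ := by
  unfold pd
  rw [fderiv_fun_mul hf hh]
  simp [smul_eq_mul]
  ring

lemma pd_mul3 {u v w : (Fin 3 → ℝ) → ℝ} {ξ : Fin 3 → ℝ} (hu : DifferentiableAt ℝ u ξ)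
    (hv : DifferentiableAt ℝ v ξ) (hw : DifferentiableAt ℝ w ξ) (a : Fin 3) :
    pd (fun ζ => u ζ * v ζ * w ζ) a ξ
      = pd u a ξ * v ξ * w ξ + u ξ * pd v a ξ * w ξ + u ξ * v ξ * pd w a ξ := by
  rw [pd_mul (hu.fun_mul hv) hw, pd_mul hu hv]
  ring

lemma pd_sub {f h : (Fin 3 → ℝ) → ℝ} {ξ : Fin 3 → ℝ} (hf : DifferentiableAt ℝ f ξ)
    (hh : DifferentiableAt ℝ h ξ) (a : Fin 3) :
    pd (fun ζ => f ζ - h ζ) a ξ = pd f a ξ - pd h a ξ := by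
  unfold pd
  rw [fderiv_fun_sub hf hh]
  simp

lemma pd_inv {h : (Fin 3 → ℝ) → ℝ} {ξ : Fin 3 → ℝ}
    (hh : DifferentiableAt ℝ h ξ) (hne : h ξ ≠ 0) (a : Fin 3) :
    pd (fun ζ => (h ζ)⁻¹) a ξ = -pd h a ξ / (h ξ)^2 := by
  have H := (hasFDerivAt_inv' (𝕜 := ℝ) hne).comp ξ hh.hasFDerivAt
  unfold pd
  have H2 : HasFDerivAt (fun ζ => (h ζ)⁻¹)
      ((-((ContinuousLinearMap.mulLeftRight ℝ ℝ) (h ξ)⁻¹) (h ξ)⁻¹).comp (fderiv ℝ h ξ)) ξ := H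
  rw [H2.fderiv]
  simp only [ContinuousLinearMap.coe_comp', Function.comp_apply,
    ContinuousLinearMap.neg_apply, ContinuousLinearMap.mulLeftRight_apply]
  field_simp

lemma pd_div {f h : (Fin 3 → ℝ) → ℝ} {ξ : Fin 3 → ℝ} (hf : DifferentiableAt ℝ f ξ)
    (hh : DifferentiableAt ℝ h ξ) (hne : h ξ ≠ 0) (a : Fin 3) :
    pd (fun ζ => f ζ / h ζ) a ξ = (pd f a ξ * h ξ - f ξ * pd h a ξ) / (h ξ)^2 := by
  have : (fun ζ => f ζ / h ζ) = fun ζ => f ζ * (h ζ)⁻¹ := by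
    funext ζ; rw [div_eq_mul_inv]
  rw [this, pd_mul hf (hh.fun_inv hne), pd_inv hh hne]
  field_simp
  ring

lemma dAt_div {f h : (Fin 3 → ℝ) → ℝ} {ξ : Fin 3 → ℝ} (hf : DifferentiableAt ℝ f ξ)
    (hh : DifferentiableAt ℝ h ξ) (hne : h ξ ≠ 0) :
    DifferentiableAt ℝ (fun ζ => f ζ / h ζ) ξ := by
  simp only [div_eq_mul_inv]
  exact hf.mul (hh.inv hne)

lemma vanish (M : Matrix (Fin 3) (Fin 3) ℝ) (hM : M.det ≠ 0) (u : Fin 3 → ℝ)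
    (h : ∀ c, ∑ f, u f * M f c = 0) : ∀ f, u f = 0 := by
  have hu : Matrix.vecMul u M = 0 := by
    funext c
    simpa [Matrix.vecMul, dotProduct] using h c
  have hM' : IsUnit M.det := isUnit_iff_ne_zero.mpr hM
  have : u = 0 := by
    have h2 := congrArg (fun v => Matrix.vecMul v M⁻¹) hu
    simpa [Matrix.vecMul_vecMul, Matrix.mul_nonsing_inv M hM'] using h2
  intro f; rw [this]; rfl


set_option maxHeartbeats 4000000 in
/-- For a rigged hypersurface with non-null rigging `ℓ`
(`g(ℓ,ℓ) ≠ 0`, `n(ℓ) = 1`), the rigged connection `Γ̄` and the rigged metric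
connection `Γ̃` — the Levi-Civita connection of the nondegenerate rigged metric
`γ_{ab} = ḡ_{ab} - ℓ_a ℓ_b / (ℓ·ℓ)` — coincide if and only if at each point
either `Ψ^a_b = 0` or `ℓ_a = 0` (the latter meaning `ℓ` is proportional to the
metric normal there). -/
theorem stmt15
    (Ch : (Fin 3 → ℝ) → Fin 4 → Fin 4 → Fin 4 → ℝ)
    (g : (Fin 3 → ℝ) → Fin 4 → Fin 4 → ℝ)
    (e : Fin 3 → (Fin 3 → ℝ) → Fin 4 → ℝ)
    (ℓ n : (Fin 3 → ℝ) → Fin 4 → ℝ)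
    (ω : Fin 3 → (Fin 3 → ℝ) → Fin 4 → ℝ)
    (hChsym : ∀ ξ α β γ, Ch ξ α β γ = Ch ξ α γ β)
    (hgsym : ∀ ξ μ ν, g ξ μ ν = g ξ ν μ)
    (hmet : ∀ ξ a μ ν, pd (fun ζ => g ζ μ ν) a ξ
      = (∑ ρ, (∑ σ, Ch ξ ρ μ σ * e a ξ σ) * g ξ ρ ν)
        + ∑ ρ, (∑ σ, Ch ξ ρ ν σ * e a ξ σ) * g ξ μ ρ)
    (hesym : ∀ ξ a b μ, pd (fun ζ => e b ζ μ) a ξ = pd (fun ζ => e a ζ μ) b ξ)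
    (he : ∀ a μ, ContDiff ℝ (⊤ : ℕ∞) (fun ζ => e a ζ μ))
    (hℓs : ∀ μ, ContDiff ℝ (⊤ : ℕ∞) (fun ζ => ℓ ζ μ))
    (hgs : ∀ μ ν, ContDiff ℝ (⊤ : ℕ∞) (fun ζ => g ζ μ ν))
    (hne : ∀ ξ a, ∑ μ, n ξ μ * e a ξ μ = 0)
    (hnl : ∀ ξ, ∑ μ, n ξ μ * ℓ ξ μ = 1)
    (hωl : ∀ ξ a, ∑ μ, ω a ξ μ * ℓ ξ μ = 0)
    (hωe : ∀ ξ a b, ∑ μ, ω a ξ μ * e b ξ μ = if a = b then (1 : ℝ) else 0)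
    (hcomp : ∀ ξ μ ν, ℓ ξ μ * n ξ ν + ∑ a, e a ξ μ * ω a ξ ν
      = if μ = ν then (1 : ℝ) else 0)
    -- the norm of the rigging and the associated rigged metric `γ`
    (ll2 : (Fin 3 → ℝ) → ℝ)
    (hll2 : ∀ ξ, ll2 ξ = ∑ μ, ∑ ν, g ξ μ ν * ℓ ξ μ * ℓ ξ ν)
    (hllnz : ∀ ξ, ll2 ξ ≠ 0)
    (llow : (Fin 3 → ℝ) → Fin 3 → ℝ)
    (hllow : ∀ ξ a, llow ξ a = ∑ μ, ∑ ν, g ξ μ ν * ℓ ξ μ * e a ξ ν)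
    (γm : (Fin 3 → ℝ) → Fin 3 → Fin 3 → ℝ)
    (hγm : ∀ ξ a b, γm ξ a b
      = (∑ μ, ∑ ν, g ξ μ ν * e a ξ μ * e b ξ ν) - llow ξ a * llow ξ b / ll2 ξ)
    (hγnd : ∀ ξ, (Matrix.of fun a b => γm ξ a b).det ≠ 0)
    -- the rigged metric connection: the Levi-Civita connection of `γ`
    (tC : (Fin 3 → ℝ) → Fin 3 → Fin 3 → Fin 3 → ℝ)
    (htsym : ∀ ξ c b a, tC ξ c b a = tC ξ c a b)
    (htmet : ∀ ξ c a b, pd (fun ζ => γm ζ a b) c ξ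
      = (∑ f, tC ξ f a c * γm ξ f b) + ∑ f, tC ξ f b c * γm ξ a f) :
    (∀ ξ c b a, tC ξ c b a = Gbar Ch e ω c b a ξ)
      ↔ (∀ ξ, (∀ a b, PsiF Ch e ω ℓ a b ξ = 0) ∨ (∀ a, llow ξ a = 0)) := by
  classical
  have dg : ∀ (ξ : Fin 3 → ℝ) (μ ν : Fin 4), DifferentiableAt ℝ (fun ζ => g ζ μ ν) ξ :=
    fun ξ μ ν => ((hgs μ ν).differentiable (by simp)).differentiableAt
  have de : ∀ (ξ : Fin 3 → ℝ) (a : Fin 3) (μ : Fin 4), DifferentiableAt ℝ (fun ζ => e a ζ μ) ξ :=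
    fun ξ a μ => ((he a μ).differentiable (by simp)).differentiableAt
  have dl : ∀ (ξ : Fin 3 → ℝ) (μ : Fin 4), DifferentiableAt ℝ (fun ζ => ℓ ζ μ) ξ :=
    fun ξ μ => ((hℓs μ).differentiable (by simp)).differentiableAt
  have dgb : ∀ (ξ : Fin 3 → ℝ) (a b : Fin 3),
      DifferentiableAt ℝ (fun ζ => ∑ μ, ∑ ν, g ζ μ ν * e a ζ μ * e b ζ ν) ξ :=
    fun ξ a b => DifferentiableAt.fun_sum fun μ _ => DifferentiableAt.fun_sum fun ν _ =>
      ((dg ξ μ ν).fun_mul (de ξ a μ)).fun_mul (de ξ b ν)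
  have dlw : ∀ (ξ : Fin 3 → ℝ) (a : Fin 3),
      DifferentiableAt ℝ (fun ζ => ∑ μ, ∑ ν, g ζ μ ν * ℓ ζ μ * e a ζ ν) ξ :=
    fun ξ a => DifferentiableAt.fun_sum fun μ _ => DifferentiableAt.fun_sum fun ν _ =>
      ((dg ξ μ ν).fun_mul (dl ξ μ)).fun_mul (de ξ a ν)
  have dl2 : ∀ (ξ : Fin 3 → ℝ),
      DifferentiableAt ℝ (fun ζ => ∑ μ, ∑ ν, g ζ μ ν * ℓ ζ μ * ℓ ζ ν) ξ :=
    fun ξ => DifferentiableAt.fun_sum fun μ _ => DifferentiableAt.fun_sum fun ν _ =>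
      ((dg ξ μ ν).fun_mul (dl ξ μ)).fun_mul (dl ξ ν)
  have fllow : ∀ a, (fun ζ => llow ζ a) = fun ζ => ∑ μ, ∑ ν, g ζ μ ν * ℓ ζ μ * e a ζ ν :=
    fun a => funext fun ζ => hllow ζ a
  have fll2 : ll2 = fun ζ => ∑ μ, ∑ ν, g ζ μ ν * ℓ ζ μ * ℓ ζ ν := funext hll2
  have l2ne : ∀ ξ, (∑ μ, ∑ ν, g ξ μ ν * ℓ ξ μ * ℓ ξ ν) ≠ 0 := fun ξ => by
    rw [← hll2 ξ]; exact hllnz ξ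
  -- symmetry of the rigged connection
  have hcovsym : ∀ ξ (a b : Fin 3) μ, cov Ch e a (e b) ξ μ = cov Ch e b (e a) ξ μ := by
    intro ξ a b μ
    simp only [cov]
    rw [hesym]
    congr 1
    rw [Finset.sum_comm]
    exact Finset.sum_congr rfl fun ν _ => Finset.sum_congr rfl fun ρ _ => by
      rw [hChsym]; ring
  have hGsym : ∀ ξ (c a b : Fin 3), Gbar Ch e ω c a b ξ = Gbar Ch e ω c b a ξ := by
    intro ξ c a b
    simp only [Gbar]
    exact Finset.sum_congr rfl fun μ _ => by rw [hcovsym ξ b a μ]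
  -- symmetry of γm
  have hγsym : ∀ ξ (a b : Fin 3), γm ξ a b = γm ξ b a := by
    intro ξ a b
    rw [hγm, hγm]
    have hsw : (∑ μ, ∑ ν, g ξ μ ν * e a ξ μ * e b ξ ν)
        = ∑ μ, ∑ ν, g ξ μ ν * e b ξ μ * e a ξ ν := by
      rw [Finset.sum_comm]
      exact Finset.sum_congr rfl fun μ _ => Finset.sum_congr rfl fun ν _ => by
        rw [hgsym]; ring
    rw [hsw]; ring
  -- derivative of the first fundamental form
  have h1 : ∀ ξ (c a b : Fin 3), pd (fun ζ => ∑ μ, ∑ ν, g ζ μ ν * e a ζ μ * e b ζ ν) c ξ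
      = (∑ μ, ∑ ν, g ξ μ ν * cov Ch e c (e a) ξ μ * e b ξ ν)
        + ∑ μ, ∑ ν, g ξ μ ν * e a ξ μ * cov Ch e c (e b) ξ ν := by
    intro ξ c a b
    have step : pd (fun ζ => ∑ μ, ∑ ν, g ζ μ ν * e a ζ μ * e b ζ ν) c ξ
        = ∑ μ, ∑ ν, (pd (fun ζ => g ζ μ ν) c ξ * e a ξ μ * e b ξ ν
          + g ξ μ ν * pd (fun ζ => e a ζ μ) c ξ * e b ξ ν
          + g ξ μ ν * e a ξ μ * pd (fun ζ => e b ζ ν) c ξ) := by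
      rw [pd_sum _ _ c (fun μ _ => DifferentiableAt.fun_sum fun ν _ =>
        ((dg ξ μ ν).fun_mul (de ξ a μ)).fun_mul (de ξ b ν))]
      refine Finset.sum_congr rfl fun μ _ => ?_
      rw [pd_sum _ _ c (fun ν _ => ((dg ξ μ ν).fun_mul (de ξ a μ)).fun_mul (de ξ b ν))]
      exact Finset.sum_congr rfl fun ν _ => pd_mul3 (dg ξ μ ν) (de ξ a μ) (de ξ b ν) c
    rw [step]
    simp only [hmet, cov]
    simp only [Fin.sum_univ_four]
    simp only [show ∀ α, Ch ξ α 1 0 = Ch ξ α 0 1 from fun α => hChsym ξ α 1 0,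
      show ∀ α, Ch ξ α 2 0 = Ch ξ α 0 2 from fun α => hChsym ξ α 2 0,
      show ∀ α, Ch ξ α 2 1 = Ch ξ α 1 2 from fun α => hChsym ξ α 2 1,
      show ∀ α, Ch ξ α 3 0 = Ch ξ α 0 3 from fun α => hChsym ξ α 3 0,
      show ∀ α, Ch ξ α 3 1 = Ch ξ α 1 3 from fun α => hChsym ξ α 3 1,
      show ∀ α, Ch ξ α 3 2 = Ch ξ α 2 3 from fun α => hChsym ξ α 3 2]
    simp only [show g ξ 1 0 = g ξ 0 1 from hgsym ξ 1 0,
      show g ξ 2 0 = g ξ 0 2 from hgsym ξ 2 0,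
      show g ξ 2 1 = g ξ 1 2 from hgsym ξ 2 1,
      show g ξ 3 0 = g ξ 0 3 from hgsym ξ 3 0,
      show g ξ 3 1 = g ξ 1 3 from hgsym ξ 3 1,
      show g ξ 3 2 = g ξ 2 3 from hgsym ξ 3 2]
    ring
  -- derivative of llow
  have h2 : ∀ ξ (c a : Fin 3), pd (fun ζ => llow ζ a) c ξ
      = (∑ μ, ∑ ν, g ξ μ ν * cov Ch e c ℓ ξ μ * e a ξ ν)
        + ∑ μ, ∑ ν, g ξ μ ν * ℓ ξ μ * cov Ch e c (e a) ξ ν := by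
    intro ξ c a
    rw [fllow a]
    have step : pd (fun ζ => ∑ μ, ∑ ν, g ζ μ ν * ℓ ζ μ * e a ζ ν) c ξ
        = ∑ μ, ∑ ν, (pd (fun ζ => g ζ μ ν) c ξ * ℓ ξ μ * e a ξ ν
          + g ξ μ ν * pd (fun ζ => ℓ ζ μ) c ξ * e a ξ ν
          + g ξ μ ν * ℓ ξ μ * pd (fun ζ => e a ζ ν) c ξ) := by
      rw [pd_sum _ _ c (fun μ _ => DifferentiableAt.fun_sum fun ν _ =>
        ((dg ξ μ ν).fun_mul (dl ξ μ)).fun_mul (de ξ a ν))]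
      refine Finset.sum_congr rfl fun μ _ => ?_
      rw [pd_sum _ _ c (fun ν _ => ((dg ξ μ ν).fun_mul (dl ξ μ)).fun_mul (de ξ a ν))]
      exact Finset.sum_congr rfl fun ν _ => pd_mul3 (dg ξ μ ν) (dl ξ μ) (de ξ a ν) c
    rw [step]
    simp only [hmet, cov]
    simp only [Fin.sum_univ_four]
    simp only [show ∀ α, Ch ξ α 1 0 = Ch ξ α 0 1 from fun α => hChsym ξ α 1 0,
      show ∀ α, Ch ξ α 2 0 = Ch ξ α 0 2 from fun α => hChsym ξ α 2 0,
      show ∀ α, Ch ξ α 2 1 = Ch ξ α 1 2 from fun α => hChsym ξ α 2 1,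
      show ∀ α, Ch ξ α 3 0 = Ch ξ α 0 3 from fun α => hChsym ξ α 3 0,
      show ∀ α, Ch ξ α 3 1 = Ch ξ α 1 3 from fun α => hChsym ξ α 3 1,
      show ∀ α, Ch ξ α 3 2 = Ch ξ α 2 3 from fun α => hChsym ξ α 3 2]
    simp only [show g ξ 1 0 = g ξ 0 1 from hgsym ξ 1 0,
      show g ξ 2 0 = g ξ 0 2 from hgsym ξ 2 0,
      show g ξ 2 1 = g ξ 1 2 from hgsym ξ 2 1,
      show g ξ 3 0 = g ξ 0 3 from hgsym ξ 3 0,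
      show g ξ 3 1 = g ξ 1 3 from hgsym ξ 3 1,
      show g ξ 3 2 = g ξ 2 3 from hgsym ξ 3 2]
    ring
  -- derivative of ll2
  have h3 : ∀ ξ (c : Fin 3), pd ll2 c ξ
      = 2 * ∑ μ, ∑ ν, g ξ μ ν * cov Ch e c ℓ ξ μ * ℓ ξ ν := by
    intro ξ c
    rw [fll2]
    have step : pd (fun ζ => ∑ μ, ∑ ν, g ζ μ ν * ℓ ζ μ * ℓ ζ ν) c ξ
        = ∑ μ, ∑ ν, (pd (fun ζ => g ζ μ ν) c ξ * ℓ ξ μ * ℓ ξ ν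
          + g ξ μ ν * pd (fun ζ => ℓ ζ μ) c ξ * ℓ ξ ν
          + g ξ μ ν * ℓ ξ μ * pd (fun ζ => ℓ ζ ν) c ξ) := by
      rw [pd_sum _ _ c (fun μ _ => DifferentiableAt.fun_sum fun ν _ =>
        ((dg ξ μ ν).fun_mul (dl ξ μ)).fun_mul (dl ξ ν))]
      refine Finset.sum_congr rfl fun μ _ => ?_
      rw [pd_sum _ _ c (fun ν _ => ((dg ξ μ ν).fun_mul (dl ξ μ)).fun_mul (dl ξ ν))]
      exact Finset.sum_congr rfl fun ν _ => pd_mul3 (dg ξ μ ν) (dl ξ μ) (dl ξ ν) c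
    rw [step]
    simp only [hmet, cov]
    simp only [Fin.sum_univ_four]
    simp only [show ∀ α, Ch ξ α 1 0 = Ch ξ α 0 1 from fun α => hChsym ξ α 1 0,
      show ∀ α, Ch ξ α 2 0 = Ch ξ α 0 2 from fun α => hChsym ξ α 2 0,
      show ∀ α, Ch ξ α 2 1 = Ch ξ α 1 2 from fun α => hChsym ξ α 2 1,
      show ∀ α, Ch ξ α 3 0 = Ch ξ α 0 3 from fun α => hChsym ξ α 3 0,
      show ∀ α, Ch ξ α 3 1 = Ch ξ α 1 3 from fun α => hChsym ξ α 3 1,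
      show ∀ α, Ch ξ α 3 2 = Ch ξ α 2 3 from fun α => hChsym ξ α 3 2]
    simp only [show g ξ 1 0 = g ξ 0 1 from hgsym ξ 1 0,
      show g ξ 2 0 = g ξ 0 2 from hgsym ξ 2 0,
      show g ξ 2 1 = g ξ 1 2 from hgsym ξ 2 1,
      show g ξ 3 0 = g ξ 0 3 from hgsym ξ 3 0,
      show g ξ 3 1 = g ξ 1 3 from hgsym ξ 3 1,
      show g ξ 3 2 = g ξ 2 3 from hgsym ξ 3 2]
    ring
  -- completeness traces
  have h4a : ∀ ξ (a : Fin 3) (X : Fin 4 → ℝ),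
      (∑ f, (∑ μ, ω f ξ μ * X μ) * (∑ μ, ∑ ν, g ξ μ ν * e f ξ μ * e a ξ ν))
        = (∑ μ, ∑ ν, g ξ μ ν * X μ * e a ξ ν) - (∑ μ, n ξ μ * X μ) * llow ξ a := by
    intro ξ a X
    have D : ∀ (ρ μ : Fin 4), e 0 ξ ρ * ω 0 ξ μ + e 1 ξ ρ * ω 1 ξ μ + e 2 ξ ρ * ω 2 ξ μ
        = (if ρ = μ then (1:ℝ) else 0) - ℓ ξ ρ * n ξ μ := by
      intro ρ μ
      have h := hcomp ξ ρ μ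
      rw [Fin.sum_univ_three] at h
      linarith
    have d00 : e 0 ξ 0 * ω 0 ξ 0 + e 1 ξ 0 * ω 1 ξ 0 + e 2 ξ 0 * ω 2 ξ 0
        = 1 - ℓ ξ 0 * n ξ 0 := by
      have := D 0 0; rwa [if_pos rfl] at this
    have d01 : e 0 ξ 0 * ω 0 ξ 1 + e 1 ξ 0 * ω 1 ξ 1 + e 2 ξ 0 * ω 2 ξ 1
        = 0 - ℓ ξ 0 * n ξ 1 := by
      have := D 0 1; rwa [if_neg (by decide)] at this
    have d02 : e 0 ξ 0 * ω 0 ξ 2 + e 1 ξ 0 * ω 1 ξ 2 + e 2 ξ 0 * ω 2 ξ 2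
        = 0 - ℓ ξ 0 * n ξ 2 := by
      have := D 0 2; rwa [if_neg (by decide)] at this
    have d03 : e 0 ξ 0 * ω 0 ξ 3 + e 1 ξ 0 * ω 1 ξ 3 + e 2 ξ 0 * ω 2 ξ 3
        = 0 - ℓ ξ 0 * n ξ 3 := by
      have := D 0 3; rwa [if_neg (by decide)] at this
    have d10 : e 0 ξ 1 * ω 0 ξ 0 + e 1 ξ 1 * ω 1 ξ 0 + e 2 ξ 1 * ω 2 ξ 0
        = 0 - ℓ ξ 1 * n ξ 0 := by
      have := D 1 0; rwa [if_neg (by decide)] at this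
    have d11 : e 0 ξ 1 * ω 0 ξ 1 + e 1 ξ 1 * ω 1 ξ 1 + e 2 ξ 1 * ω 2 ξ 1
        = 1 - ℓ ξ 1 * n ξ 1 := by
      have := D 1 1; rwa [if_pos rfl] at this
    have d12 : e 0 ξ 1 * ω 0 ξ 2 + e 1 ξ 1 * ω 1 ξ 2 + e 2 ξ 1 * ω 2 ξ 2
        = 0 - ℓ ξ 1 * n ξ 2 := by
      have := D 1 2; rwa [if_neg (by decide)] at this
    have d13 : e 0 ξ 1 * ω 0 ξ 3 + e 1 ξ 1 * ω 1 ξ 3 + e 2 ξ 1 * ω 2 ξ 3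
        = 0 - ℓ ξ 1 * n ξ 3 := by
      have := D 1 3; rwa [if_neg (by decide)] at this
    have d20 : e 0 ξ 2 * ω 0 ξ 0 + e 1 ξ 2 * ω 1 ξ 0 + e 2 ξ 2 * ω 2 ξ 0
        = 0 - ℓ ξ 2 * n ξ 0 := by
      have := D 2 0; rwa [if_neg (by decide)] at this
    have d21 : e 0 ξ 2 * ω 0 ξ 1 + e 1 ξ 2 * ω 1 ξ 1 + e 2 ξ 2 * ω 2 ξ 1
        = 0 - ℓ ξ 2 * n ξ 1 := by
      have := D 2 1; rwa [if_neg (by decide)] at this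
    have d22 : e 0 ξ 2 * ω 0 ξ 2 + e 1 ξ 2 * ω 1 ξ 2 + e 2 ξ 2 * ω 2 ξ 2
        = 1 - ℓ ξ 2 * n ξ 2 := by
      have := D 2 2; rwa [if_pos rfl] at this
    have d23 : e 0 ξ 2 * ω 0 ξ 3 + e 1 ξ 2 * ω 1 ξ 3 + e 2 ξ 2 * ω 2 ξ 3
        = 0 - ℓ ξ 2 * n ξ 3 := by
      have := D 2 3; rwa [if_neg (by decide)] at this
    have d30 : e 0 ξ 3 * ω 0 ξ 0 + e 1 ξ 3 * ω 1 ξ 0 + e 2 ξ 3 * ω 2 ξ 0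
        = 0 - ℓ ξ 3 * n ξ 0 := by
      have := D 3 0; rwa [if_neg (by decide)] at this
    have d31 : e 0 ξ 3 * ω 0 ξ 1 + e 1 ξ 3 * ω 1 ξ 1 + e 2 ξ 3 * ω 2 ξ 1
        = 0 - ℓ ξ 3 * n ξ 1 := by
      have := D 3 1; rwa [if_neg (by decide)] at this
    have d32 : e 0 ξ 3 * ω 0 ξ 2 + e 1 ξ 3 * ω 1 ξ 2 + e 2 ξ 3 * ω 2 ξ 2
        = 0 - ℓ ξ 3 * n ξ 2 := by
      have := D 3 2; rwa [if_neg (by decide)] at this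
    have d33 : e 0 ξ 3 * ω 0 ξ 3 + e 1 ξ 3 * ω 1 ξ 3 + e 2 ξ 3 * ω 2 ξ 3
        = 1 - ℓ ξ 3 * n ξ 3 := by
      have := D 3 3; rwa [if_pos rfl] at this
    rw [hllow ξ a]
    simp only [Fin.sum_univ_three, Fin.sum_univ_four]
    linear_combination
      (X 0 * (g ξ 0 0 * e a ξ 0 + g ξ 0 1 * e a ξ 1 + g ξ 0 2 * e a ξ 2 + g ξ 0 3 * e a ξ 3)) * d00
      + (X 1 * (g ξ 0 0 * e a ξ 0 + g ξ 0 1 * e a ξ 1 + g ξ 0 2 * e a ξ 2 + g ξ 0 3 * e a ξ 3)) * d01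
      + (X 2 * (g ξ 0 0 * e a ξ 0 + g ξ 0 1 * e a ξ 1 + g ξ 0 2 * e a ξ 2 + g ξ 0 3 * e a ξ 3)) * d02
      + (X 3 * (g ξ 0 0 * e a ξ 0 + g ξ 0 1 * e a ξ 1 + g ξ 0 2 * e a ξ 2 + g ξ 0 3 * e a ξ 3)) * d03
      + (X 0 * (g ξ 1 0 * e a ξ 0 + g ξ 1 1 * e a ξ 1 + g ξ 1 2 * e a ξ 2 + g ξ 1 3 * e a ξ 3)) * d10
      + (X 1 * (g ξ 1 0 * e a ξ 0 + g ξ 1 1 * e a ξ 1 + g ξ 1 2 * e a ξ 2 + g ξ 1 3 * e a ξ 3)) * d11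
      + (X 2 * (g ξ 1 0 * e a ξ 0 + g ξ 1 1 * e a ξ 1 + g ξ 1 2 * e a ξ 2 + g ξ 1 3 * e a ξ 3)) * d12
      + (X 3 * (g ξ 1 0 * e a ξ 0 + g ξ 1 1 * e a ξ 1 + g ξ 1 2 * e a ξ 2 + g ξ 1 3 * e a ξ 3)) * d13
      + (X 0 * (g ξ 2 0 * e a ξ 0 + g ξ 2 1 * e a ξ 1 + g ξ 2 2 * e a ξ 2 + g ξ 2 3 * e a ξ 3)) * d20
      + (X 1 * (g ξ 2 0 * e a ξ 0 + g ξ 2 1 * e a ξ 1 + g ξ 2 2 * e a ξ 2 + g ξ 2 3 * e a ξ 3)) * d21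
      + (X 2 * (g ξ 2 0 * e a ξ 0 + g ξ 2 1 * e a ξ 1 + g ξ 2 2 * e a ξ 2 + g ξ 2 3 * e a ξ 3)) * d22
      + (X 3 * (g ξ 2 0 * e a ξ 0 + g ξ 2 1 * e a ξ 1 + g ξ 2 2 * e a ξ 2 + g ξ 2 3 * e a ξ 3)) * d23
      + (X 0 * (g ξ 3 0 * e a ξ 0 + g ξ 3 1 * e a ξ 1 + g ξ 3 2 * e a ξ 2 + g ξ 3 3 * e a ξ 3)) * d30
      + (X 1 * (g ξ 3 0 * e a ξ 0 + g ξ 3 1 * e a ξ 1 + g ξ 3 2 * e a ξ 2 + g ξ 3 3 * e a ξ 3)) * d31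
      + (X 2 * (g ξ 3 0 * e a ξ 0 + g ξ 3 1 * e a ξ 1 + g ξ 3 2 * e a ξ 2 + g ξ 3 3 * e a ξ 3)) * d32
      + (X 3 * (g ξ 3 0 * e a ξ 0 + g ξ 3 1 * e a ξ 1 + g ξ 3 2 * e a ξ 2 + g ξ 3 3 * e a ξ 3)) * d33
  have h4b : ∀ ξ (X : Fin 4 → ℝ),
      (∑ f, (∑ μ, ω f ξ μ * X μ) * llow ξ f)
        = (∑ μ, ∑ ν, g ξ μ ν * X μ * ℓ ξ ν) - (∑ μ, n ξ μ * X μ) * ll2 ξ := by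
    intro ξ X
    have D : ∀ (ρ μ : Fin 4), e 0 ξ ρ * ω 0 ξ μ + e 1 ξ ρ * ω 1 ξ μ + e 2 ξ ρ * ω 2 ξ μ
        = (if ρ = μ then (1:ℝ) else 0) - ℓ ξ ρ * n ξ μ := by
      intro ρ μ
      have h := hcomp ξ ρ μ
      rw [Fin.sum_univ_three] at h
      linarith
    have d00 : e 0 ξ 0 * ω 0 ξ 0 + e 1 ξ 0 * ω 1 ξ 0 + e 2 ξ 0 * ω 2 ξ 0
        = 1 - ℓ ξ 0 * n ξ 0 := by
      have := D 0 0; rwa [if_pos rfl] at this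
    have d01 : e 0 ξ 0 * ω 0 ξ 1 + e 1 ξ 0 * ω 1 ξ 1 + e 2 ξ 0 * ω 2 ξ 1
        = 0 - ℓ ξ 0 * n ξ 1 := by
      have := D 0 1; rwa [if_neg (by decide)] at this
    have d02 : e 0 ξ 0 * ω 0 ξ 2 + e 1 ξ 0 * ω 1 ξ 2 + e 2 ξ 0 * ω 2 ξ 2
        = 0 - ℓ ξ 0 * n ξ 2 := by
      have := D 0 2; rwa [if_neg (by decide)] at this
    have d03 : e 0 ξ 0 * ω 0 ξ 3 + e 1 ξ 0 * ω 1 ξ 3 + e 2 ξ 0 * ω 2 ξ 3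
        = 0 - ℓ ξ 0 * n ξ 3 := by
      have := D 0 3; rwa [if_neg (by decide)] at this
    have d10 : e 0 ξ 1 * ω 0 ξ 0 + e 1 ξ 1 * ω 1 ξ 0 + e 2 ξ 1 * ω 2 ξ 0
        = 0 - ℓ ξ 1 * n ξ 0 := by
      have := D 1 0; rwa [if_neg (by decide)] at this
    have d11 : e 0 ξ 1 * ω 0 ξ 1 + e 1 ξ 1 * ω 1 ξ 1 + e 2 ξ 1 * ω 2 ξ 1
        = 1 - ℓ ξ 1 * n ξ 1 := by
      have := D 1 1; rwa [if_pos rfl] at this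
    have d12 : e 0 ξ 1 * ω 0 ξ 2 + e 1 ξ 1 * ω 1 ξ 2 + e 2 ξ 1 * ω 2 ξ 2
        = 0 - ℓ ξ 1 * n ξ 2 := by
      have := D 1 2; rwa [if_neg (by decide)] at this
    have d13 : e 0 ξ 1 * ω 0 ξ 3 + e 1 ξ 1 * ω 1 ξ 3 + e 2 ξ 1 * ω 2 ξ 3
        = 0 - ℓ ξ 1 * n ξ 3 := by
      have := D 1 3; rwa [if_neg (by decide)] at this
    have d20 : e 0 ξ 2 * ω 0 ξ 0 + e 1 ξ 2 * ω 1 ξ 0 + e 2 ξ 2 * ω 2 ξ 0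
        = 0 - ℓ ξ 2 * n ξ 0 := by
      have := D 2 0; rwa [if_neg (by decide)] at this
    have d21 : e 0 ξ 2 * ω 0 ξ 1 + e 1 ξ 2 * ω 1 ξ 1 + e 2 ξ 2 * ω 2 ξ 1
        = 0 - ℓ ξ 2 * n ξ 1 := by
      have := D 2 1; rwa [if_neg (by decide)] at this
    have d22 : e 0 ξ 2 * ω 0 ξ 2 + e 1 ξ 2 * ω 1 ξ 2 + e 2 ξ 2 * ω 2 ξ 2
        = 1 - ℓ ξ 2 * n ξ 2 := by
      have := D 2 2; rwa [if_pos rfl] at this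
    have d23 : e 0 ξ 2 * ω 0 ξ 3 + e 1 ξ 2 * ω 1 ξ 3 + e 2 ξ 2 * ω 2 ξ 3
        = 0 - ℓ ξ 2 * n ξ 3 := by
      have := D 2 3; rwa [if_neg (by decide)] at this
    have d30 : e 0 ξ 3 * ω 0 ξ 0 + e 1 ξ 3 * ω 1 ξ 0 + e 2 ξ 3 * ω 2 ξ 0
        = 0 - ℓ ξ 3 * n ξ 0 := by
      have := D 3 0; rwa [if_neg (by decide)] at this
    have d31 : e 0 ξ 3 * ω 0 ξ 1 + e 1 ξ 3 * ω 1 ξ 1 + e 2 ξ 3 * ω 2 ξ 1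
        = 0 - ℓ ξ 3 * n ξ 1 := by
      have := D 3 1; rwa [if_neg (by decide)] at this
    have d32 : e 0 ξ 3 * ω 0 ξ 2 + e 1 ξ 3 * ω 1 ξ 2 + e 2 ξ 3 * ω 2 ξ 2
        = 0 - ℓ ξ 3 * n ξ 2 := by
      have := D 3 2; rwa [if_neg (by decide)] at this
    have d33 : e 0 ξ 3 * ω 0 ξ 3 + e 1 ξ 3 * ω 1 ξ 3 + e 2 ξ 3 * ω 2 ξ 3
        = 1 - ℓ ξ 3 * n ξ 3 := by
      have := D 3 3; rwa [if_pos rfl] at this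
    rw [hll2 ξ]
    simp only [hllow ξ]
    simp only [Fin.sum_univ_three, Fin.sum_univ_four]
    simp only [show g ξ 1 0 = g ξ 0 1 from hgsym ξ 1 0,
      show g ξ 2 0 = g ξ 0 2 from hgsym ξ 2 0,
      show g ξ 2 1 = g ξ 1 2 from hgsym ξ 2 1,
      show g ξ 3 0 = g ξ 0 3 from hgsym ξ 3 0,
      show g ξ 3 1 = g ξ 1 3 from hgsym ξ 3 1,
      show g ξ 3 2 = g ξ 2 3 from hgsym ξ 3 2]
    linear_combination
      (X 0 * (g ξ 0 0 * ℓ ξ 0 + g ξ 0 1 * ℓ ξ 1 + g ξ 0 2 * ℓ ξ 2 + g ξ 0 3 * ℓ ξ 3)) * d00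
      + (X 1 * (g ξ 0 0 * ℓ ξ 0 + g ξ 0 1 * ℓ ξ 1 + g ξ 0 2 * ℓ ξ 2 + g ξ 0 3 * ℓ ξ 3)) * d01
      + (X 2 * (g ξ 0 0 * ℓ ξ 0 + g ξ 0 1 * ℓ ξ 1 + g ξ 0 2 * ℓ ξ 2 + g ξ 0 3 * ℓ ξ 3)) * d02
      + (X 3 * (g ξ 0 0 * ℓ ξ 0 + g ξ 0 1 * ℓ ξ 1 + g ξ 0 2 * ℓ ξ 2 + g ξ 0 3 * ℓ ξ 3)) * d03
      + (X 0 * (g ξ 0 1 * ℓ ξ 0 + g ξ 1 1 * ℓ ξ 1 + g ξ 1 2 * ℓ ξ 2 + g ξ 1 3 * ℓ ξ 3)) * d10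
      + (X 1 * (g ξ 0 1 * ℓ ξ 0 + g ξ 1 1 * ℓ ξ 1 + g ξ 1 2 * ℓ ξ 2 + g ξ 1 3 * ℓ ξ 3)) * d11
      + (X 2 * (g ξ 0 1 * ℓ ξ 0 + g ξ 1 1 * ℓ ξ 1 + g ξ 1 2 * ℓ ξ 2 + g ξ 1 3 * ℓ ξ 3)) * d12
      + (X 3 * (g ξ 0 1 * ℓ ξ 0 + g ξ 1 1 * ℓ ξ 1 + g ξ 1 2 * ℓ ξ 2 + g ξ 1 3 * ℓ ξ 3)) * d13
      + (X 0 * (g ξ 0 2 * ℓ ξ 0 + g ξ 1 2 * ℓ ξ 1 + g ξ 2 2 * ℓ ξ 2 + g ξ 2 3 * ℓ ξ 3)) * d20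
      + (X 1 * (g ξ 0 2 * ℓ ξ 0 + g ξ 1 2 * ℓ ξ 1 + g ξ 2 2 * ℓ ξ 2 + g ξ 2 3 * ℓ ξ 3)) * d21
      + (X 2 * (g ξ 0 2 * ℓ ξ 0 + g ξ 1 2 * ℓ ξ 1 + g ξ 2 2 * ℓ ξ 2 + g ξ 2 3 * ℓ ξ 3)) * d22
      + (X 3 * (g ξ 0 2 * ℓ ξ 0 + g ξ 1 2 * ℓ ξ 1 + g ξ 2 2 * ℓ ξ 2 + g ξ 2 3 * ℓ ξ 3)) * d23
      + (X 0 * (g ξ 0 3 * ℓ ξ 0 + g ξ 1 3 * ℓ ξ 1 + g ξ 2 3 * ℓ ξ 2 + g ξ 3 3 * ℓ ξ 3)) * d30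
      + (X 1 * (g ξ 0 3 * ℓ ξ 0 + g ξ 1 3 * ℓ ξ 1 + g ξ 2 3 * ℓ ξ 2 + g ξ 3 3 * ℓ ξ 3)) * d31
      + (X 2 * (g ξ 0 3 * ℓ ξ 0 + g ξ 1 3 * ℓ ξ 1 + g ξ 2 3 * ℓ ξ 2 + g ξ 3 3 * ℓ ξ 3)) * d32
      + (X 3 * (g ξ 0 3 * ℓ ξ 0 + g ξ 1 3 * ℓ ξ 1 + g ξ 2 3 * ℓ ξ 2 + g ξ 3 3 * ℓ ξ 3)) * d33
  have h5 : ∀ ξ (a : Fin 3) (X : Fin 4 → ℝ),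
      (∑ f, (∑ μ, ω f ξ μ * X μ) * γm ξ f a)
        = (∑ μ, ∑ ν, g ξ μ ν * X μ * e a ξ ν)
          - llow ξ a / ll2 ξ * ∑ μ, ∑ ν, g ξ μ ν * X μ * ℓ ξ ν := by
    intro ξ a X
    have : ∀ f : Fin 3, γm ξ f a
        = (∑ μ, ∑ ν, g ξ μ ν * e f ξ μ * e a ξ ν) - llow ξ f * llow ξ a / ll2 ξ :=
      fun f => hγm ξ f a
    calc (∑ f, (∑ μ, ω f ξ μ * X μ) * γm ξ f a)
        = (∑ f, (∑ μ, ω f ξ μ * X μ) * (∑ μ, ∑ ν, g ξ μ ν * e f ξ μ * e a ξ ν))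
          - (∑ f, (∑ μ, ω f ξ μ * X μ) * llow ξ f) * (llow ξ a / ll2 ξ) := by
          rw [Finset.sum_mul, ← Finset.sum_sub_distrib]
          refine Finset.sum_congr rfl fun f _ => ?_
          rw [this f]; ring
      _ = _ := by
          rw [h4a ξ a X, h4b ξ X]
          field_simp [hllnz ξ]
          ring
  -- symmetry of the ambient metric contraction
  have hGP : ∀ ξ (X Y : Fin 4 → ℝ),
      (∑ μ, ∑ ν, g ξ μ ν * X μ * Y ν) = ∑ μ, ∑ ν, g ξ μ ν * Y μ * X ν := by
    intro ξ X Y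
    rw [Finset.sum_comm]
    exact Finset.sum_congr rfl fun μ _ => Finset.sum_congr rfl fun ν _ => by
      rw [hgsym]; ring
  -- THE key identity: nonmetricity of the rigged connection
  have hN : ∀ ξ (c a b : Fin 3), pd (fun ζ => γm ζ a b) c ξ
      = ((∑ f, Gbar Ch e ω f a c ξ * γm ξ f b) + ∑ f, Gbar Ch e ω f b c ξ * γm ξ a f)
        - (llow ξ b * (∑ d, PsiF Ch e ω ℓ d c ξ * γm ξ d a)
            + llow ξ a * (∑ d, PsiF Ch e ω ℓ d c ξ * γm ξ d b)) / ll2 ξ := by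
    intro ξ c a b
    have fγ : (fun ζ => γm ζ a b) = fun ζ =>
        (∑ μ, ∑ ν, g ζ μ ν * e a ζ μ * e b ζ ν)
          - (∑ μ, ∑ ν, g ζ μ ν * ℓ ζ μ * e a ζ ν) * (∑ μ, ∑ ν, g ζ μ ν * ℓ ζ μ * e b ζ ν)
            / (∑ μ, ∑ ν, g ζ μ ν * ℓ ζ μ * ℓ ζ ν) := by
      funext ζ
      rw [hγm ζ a b, hllow ζ a, hllow ζ b, hll2 ζ]
    rw [fγ]
    rw [pd_sub (dgb ξ a b) (dAt_div ((dlw ξ a).fun_mul (dlw ξ b)) (dl2 ξ) (l2ne ξ)) c]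
    rw [pd_div ((dlw ξ a).fun_mul (dlw ξ b)) (dl2 ξ) (l2ne ξ) c]
    rw [pd_mul (dlw ξ a) (dlw ξ b) c]
    have e2a := h2 ξ c a
    rw [fllow a] at e2a
    have e2b := h2 ξ c b
    rw [fllow b] at e2b
    have e3 := h3 ξ c
    rw [fll2] at e3
    rw [h1 ξ c a b, e2a, e2b, e3]
    -- contractions on the RHS
    have r1 : (∑ f, Gbar Ch e ω f a c ξ * γm ξ f b)
        = (∑ μ, ∑ ν, g ξ μ ν * cov Ch e c (e a) ξ μ * e b ξ ν)
          - llow ξ b / ll2 ξ * ∑ μ, ∑ ν, g ξ μ ν * cov Ch e c (e a) ξ μ * ℓ ξ ν := by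
      simpa only [Gbar] using h5 ξ b (cov Ch e c (e a) ξ)
    have r2 : (∑ f, Gbar Ch e ω f b c ξ * γm ξ a f)
        = (∑ μ, ∑ ν, g ξ μ ν * cov Ch e c (e b) ξ μ * e a ξ ν)
          - llow ξ a / ll2 ξ * ∑ μ, ∑ ν, g ξ μ ν * cov Ch e c (e b) ξ μ * ℓ ξ ν := by
      have : ∀ f, γm ξ a f = γm ξ f a := fun f => hγsym ξ a f
      simp only [this]
      simpa only [Gbar] using h5 ξ a (cov Ch e c (e b) ξ)
    have rpa : (∑ d, PsiF Ch e ω ℓ d c ξ * γm ξ d a)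
        = (∑ μ, ∑ ν, g ξ μ ν * cov Ch e c ℓ ξ μ * e a ξ ν)
          - llow ξ a / ll2 ξ * ∑ μ, ∑ ν, g ξ μ ν * cov Ch e c ℓ ξ μ * ℓ ξ ν := by
      simpa only [PsiF] using h5 ξ a (cov Ch e c ℓ ξ)
    have rpb : (∑ d, PsiF Ch e ω ℓ d c ξ * γm ξ d b)
        = (∑ μ, ∑ ν, g ξ μ ν * cov Ch e c ℓ ξ μ * e b ξ ν)
          - llow ξ b / ll2 ξ * ∑ μ, ∑ ν, g ξ μ ν * cov Ch e c ℓ ξ μ * ℓ ξ ν := by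
      simpa only [PsiF] using h5 ξ b (cov Ch e c ℓ ξ)
    rw [r1, r2, rpa, rpb]
    rw [hGP ξ (e a ξ) (cov Ch e c (e b) ξ), hGP ξ (ℓ ξ) (cov Ch e c (e a) ξ),
      hGP ξ (ℓ ξ) (cov Ch e c (e b) ξ)]
    rw [← hll2 ξ, ← hllow ξ a, ← hllow ξ b]
    field_simp [hllnz ξ]
    ring
  -- packaging
  have numzero : ∀ ξ, ((∀ a b, PsiF Ch e ω ℓ a b ξ = 0) ∨ (∀ a, llow ξ a = 0)) →
      ∀ c a b, (llow ξ b * (∑ d, PsiF Ch e ω ℓ d c ξ * γm ξ d a)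
            + llow ξ a * (∑ d, PsiF Ch e ω ℓ d c ξ * γm ξ d b)) = 0 := by
    intro ξ hp c a b
    rcases hp with hp | hp
    · have z : ∀ a', (∑ d, PsiF Ch e ω ℓ d c ξ * γm ξ d a') = 0 := by
        intro a'
        refine Finset.sum_eq_zero fun d _ => ?_
        rw [hp d c, zero_mul]
      rw [z a, z b]; ring
    · rw [hp a, hp b]; ring
  constructor
  · -- Γ̃ = Γ̄ → pointwise condition
    intro heq ξ
    have hzero : ∀ c a b, llow ξ b * (∑ d, PsiF Ch e ω ℓ d c ξ * γm ξ d a)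
        + llow ξ a * (∑ d, PsiF Ch e ω ℓ d c ξ * γm ξ d b) = 0 := by
      intro c a b
      have ht := htmet ξ c a b
      have hc : ∀ f x y, tC ξ f x y = Gbar Ch e ω f x y ξ := fun f x y => heq ξ f x y
      simp only [hc] at ht
      have h0 := hN ξ c a b
      rw [ht] at h0
      have hdz : (llow ξ b * (∑ d, PsiF Ch e ω ℓ d c ξ * γm ξ d a)
          + llow ξ a * (∑ d, PsiF Ch e ω ℓ d c ξ * γm ξ d b)) / ll2 ξ = 0 := by
        linarith
      exact (div_eq_zero_iff.mp hdz).resolve_right (hllnz ξ)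
    by_cases hl : ∀ a, llow ξ a = 0
    · exact Or.inr hl
    · left
      push_neg at hl
      obtain ⟨a₀, ha₀⟩ := hl
      have hV : ∀ c a', (∑ d, PsiF Ch e ω ℓ d c ξ * γm ξ d a') = 0 := by
        intro c a'
        have h0 := hzero c a₀ a₀
        have hV0 : (∑ d, PsiF Ch e ω ℓ d c ξ * γm ξ d a₀) = 0 := by
          have : llow ξ a₀ * (2 * ∑ d, PsiF Ch e ω ℓ d c ξ * γm ξ d a₀) = 0 := by
            linarith
          rcases mul_eq_zero.mp this with h | h
          · exact absurd h ha₀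
          · linarith
        have h1' := hzero c a' a₀
        rw [hV0] at h1'
        have : llow ξ a₀ * (∑ d, PsiF Ch e ω ℓ d c ξ * γm ξ d a') = 0 := by linarith
        rcases mul_eq_zero.mp this with h | h
        · exact absurd h ha₀
        · exact h
      intro a b
      have := vanish (Matrix.of fun x y => γm ξ x y) (hγnd ξ)
        (fun d => PsiF Ch e ω ℓ d b ξ) (fun cc => by
          simpa [Matrix.of_apply] using hV b cc) a
      simpa using this
  · -- pointwise condition → Γ̃ = Γ̄
    intro hp ξ c b a
    -- the rigged connection is metric for γ
    have hGmet : ∀ c a b, pd (fun ζ => γm ζ a b) c ξ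
        = (∑ f, Gbar Ch e ω f a c ξ * γm ξ f b) + ∑ f, Gbar Ch e ω f b c ξ * γm ξ a f := by
      intro c a b
      rw [hN ξ c a b, numzero ξ (hp ξ) c a b, zero_div, sub_zero]
    -- uniqueness of the Levi-Civita connection
    set D : Fin 3 → Fin 3 → Fin 3 → ℝ := fun f x y => tC ξ f x y - Gbar Ch e ω f x y ξ with hD
    have hDsym : ∀ f x y, D f x y = D f y x := by
      intro f x y
      simp only [hD]
      rw [htsym ξ f x y, hGsym ξ f x y]
    set A : Fin 3 → Fin 3 → Fin 3 → ℝ := fun x y z => ∑ f, D f x y * γm ξ f z with hA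
    have hA12 : ∀ x y z, A x y z = A y x z := by
      intro x y z
      exact Finset.sum_congr rfl fun f _ => by rw [hDsym f x y]
    have hR : ∀ x y z, A x z y + A y z x = 0 := by
      intro x y z
      have ht := htmet ξ z x y
      have hg := hGmet z x y
      have expand : A x z y + A y z x = 0 := by
        have e1 : (∑ f, tC ξ f x z * γm ξ f y) - (∑ f, Gbar Ch e ω f x z ξ * γm ξ f y)
            = A x z y := by
          simp only [hA, hD]
          rw [← Finset.sum_sub_distrib]
          exact Finset.sum_congr rfl fun f _ => by ring
        have e2 : (∑ f, tC ξ f y z * γm ξ x f) - (∑ f, Gbar Ch e ω f y z ξ * γm ξ x f)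
            = A y z x := by
          simp only [hA, hD]
          rw [← Finset.sum_sub_distrib]
          refine Finset.sum_congr rfl fun f _ => ?_
          rw [hγsym ξ x f]; ring
        rw [← e1, ← e2]
        linarith
      exact expand
    have hA13 : ∀ x y z, A x y z = - A z y x := by
      intro x y z
      have := hR x z y
      linarith
    have hAzero : ∀ x y z, A x y z = 0 := by
      intro x y z
      have h1' : A x y z = - A x y z := by
        calc A x y z = A y x z := hA12 x y z
        _ = - A z x y := hA13 y x z
        _ = - A x z y := by rw [hA12 z x y]
        _ = A y z x := by rw [hA13 x z y]; ring_nf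
        _ = A z y x := hA12 y z x
        _ = - A x y z := hA13 z y x
      linarith
    have hDzero : ∀ f x y, D f x y = 0 := by
      intro f x y
      exact vanish (Matrix.of fun p q => γm ξ p q) (hγnd ξ) (fun f' => D f' x y)
        (fun cc => by simpa [Matrix.of_apply] using hAzero x y cc) f
    have := hDzero c b a
    simp only [hD] at this
    linarith

end
end

section
/- Let V be a 4-dimensional real vector space with nondegenerate symmetric bilinear form g, n a nonzero covector with metric dual n♯ satisfying g(n♯, n♯) = 0 (null case), and let [R] be a tensor with Riemann symmetries of the form [R]_{αβλμ} = n_α n_λ B_{βμ} - n_λ n_β B_{αμ} - n_μ n_α B_{βλ} + n_μ n_β B_{αλ} for some symmetric B. Then the contracted 'Israel condition' holds automatically: n^σ [G_{σλ}] = 0, where [G_{βμ}] = [R_{βμ}] - (1/2) g_{βμ} [R], [R_{βμ}] = g^{αλ}[R]_{αβλμ}, [R] = g^{βμ}[R_{βμ}]. -/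
/-- Let `g` be a nondegenerate symmetric bilinear form (with
two-sided inverse `gi`) on a 4-dimensional space, `n` a nonzero covector whose
metric dual is null, and `[R]` the allowed Riemann discontinuity
`[R]_{αβλμ} = n_α n_λ B_{βμ} - n_λ n_β B_{αμ} - n_μ n_α B_{βλ} + n_μ n_β B_{αλ}`
built from a symmetric `B`. Then the Israel condition `n^σ [G_{σλ}] = 0` holds,
where `[G]` is the Einstein combination of the Ricci trace `[Ric]` and scalar
trace `[R]` of the discontinuity. -/
theorem stmt19 (g gi : Matrix (Fin 4) (Fin 4) ℝ)
    (hgsym : g.IsSymm) (hgi : g * gi = 1) (hig : gi * g = 1)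
    (n : Fin 4 → ℝ) (hn : n ≠ 0)
    (hnull : ∑ σ, ∑ ρ, gi σ ρ * n σ * n ρ = 0)
    (B : Matrix (Fin 4) (Fin 4) ℝ) (hB : B.IsSymm)
    (Rj : Fin 4 → Fin 4 → Fin 4 → Fin 4 → ℝ)
    (hRj : ∀ α β lam μ, Rj α β lam μ =
      n α * n lam * B β μ - n lam * n β * B α μ - n μ * n α * B β lam
        + n μ * n β * B α lam)
    (Ricj : Fin 4 → Fin 4 → ℝ)
    (hRicj : ∀ β μ, Ricj β μ = ∑ α, ∑ lam, gi α lam * Rj α β lam μ)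
    (Rs : ℝ) (hRs : Rs = ∑ β, ∑ μ, gi β μ * Ricj β μ)
    (Gj : Fin 4 → Fin 4 → ℝ)
    (hGj : ∀ β μ, Gj β μ = Ricj β μ - (1 / 2) * g β μ * Rs) :
    ∀ lam, ∑ σ, (∑ ρ, gi σ ρ * n ρ) * Gj σ lam = 0 := by
  have hgs : ∀ i j, g j i = g i j := fun i j => hgsym.apply i j
  have hBs : ∀ i j, B j i = B i j := fun i j => hB.apply i j
  have higsymm : gi.IsSymm := by
    have h1 : (Matrix.transpose gi) * g = 1 := by
      have h := congrArg Matrix.transpose hgi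
      rwa [Matrix.transpose_mul, Matrix.transpose_one, hgsym.eq] at h
    calc (Matrix.transpose gi) = (Matrix.transpose gi) * (g * gi) := by rw [hgi, Matrix.mul_one]
      _ = ((Matrix.transpose gi) * g) * gi := by rw [Matrix.mul_assoc]
      _ = gi := by rw [h1, Matrix.one_mul]
  have hgis : ∀ i j, gi j i = gi i j := fun i j => higsymm.apply i j
  set w : Fin 4 → ℝ := fun σ => ∑ ρ, gi σ ρ * n ρ with hw
  have hw2 : ∀ lam, ∑ α, gi α lam * n α = w lam := by
    intro lam
    simp only [hw]
    exact Finset.sum_congr rfl fun α _ => by rw [hgis lam α]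
  have hwn : ∑ σ, w σ * n σ = 0 := by
    rw [← hnull]
    simp only [hw, Finset.sum_mul]
    exact Finset.sum_congr rfl fun σ _ => Finset.sum_congr rfl fun ρ _ => by ring
  set u : Fin 4 → ℝ := fun μ => ∑ α, w α * B α μ with hu
  set T : ℝ := ∑ α, ∑ lam, gi α lam * B α lam with hT
  set S : ℝ := ∑ μ, w μ * u μ with hS
  -- key contractions
  have key0 : ∑ α, ∑ lam, gi α lam * n α * n lam = 0 := by
    rw [← hwn]
    refine Finset.sum_congr rfl fun α _ => ?_
    simp only [hw]
    rw [Finset.sum_mul]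
    exact Finset.sum_congr rfl fun lam _ => by ring
  have e2 : ∀ μ, ∑ α, ∑ lam, gi α lam * n lam * B α μ = u μ := by
    intro μ
    simp only [hu, hw]
    refine Finset.sum_congr rfl fun α _ => ?_
    rw [Finset.sum_mul]
  have e3 : ∀ β, ∑ α, ∑ lam, gi α lam * n α * B β lam = u β := by
    intro β
    rw [Finset.sum_comm]
    simp only [hu]
    refine Finset.sum_congr rfl fun lam _ => ?_
    rw [← hw2 lam, Finset.sum_mul, hBs lam β]
  have hRic' : ∀ β μ, Ricj β μ = -(n β * u μ) - n μ * u β + n μ * n β * T := by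
    intro β μ
    rw [hRicj]
    calc ∑ α, ∑ lam, gi α lam * Rj α β lam μ
        = ∑ α, ∑ lam, ((gi α lam * n α * n lam) * B β μ
          - (gi α lam * n lam * B α μ) * n β
          - (gi α lam * n α * B β lam) * n μ
          + (gi α lam * B α lam) * (n μ * n β)) := by
          refine Finset.sum_congr rfl fun α _ => Finset.sum_congr rfl fun lam _ => ?_
          rw [hRj]; ring
      _ = (∑ α, ∑ lam, gi α lam * n α * n lam) * B β μ
          - (∑ α, ∑ lam, gi α lam * n lam * B α μ) * n β
          - (∑ α, ∑ lam, gi α lam * n α * B β lam) * n μ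
          + (∑ α, ∑ lam, gi α lam * B α lam) * (n μ * n β) := by
          simp only [Finset.sum_sub_distrib, Finset.sum_add_distrib, Finset.sum_mul]
      _ = -(n β * u μ) - n μ * u β + n μ * n β * T := by
          rw [key0, e2, e3, ← hT]; ring
  have c1 : ∑ β, ∑ μ, gi β μ * n β * u μ = S := by
    rw [Finset.sum_comm, hS]
    refine Finset.sum_congr rfl fun μ _ => ?_
    rw [← hw2 μ, Finset.sum_mul]
  have c2 : ∑ β, ∑ μ, gi β μ * n μ * u β = S := by
    rw [hS]
    refine Finset.sum_congr rfl fun β _ => ?_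
    simp only [hw]
    rw [Finset.sum_mul]
  have c3 : ∑ β, ∑ μ, gi β μ * n μ * n β = 0 := by
    rw [← hwn]
    refine Finset.sum_congr rfl fun β _ => ?_
    simp only [hw]
    rw [Finset.sum_mul]
  have hgw : ∀ lam, ∑ σ, w σ * g σ lam = n lam := by
    intro lam
    have h1 : ∀ σ, w σ * g σ lam = ∑ ρ, g lam σ * gi σ ρ * n ρ := fun σ => by
      simp only [hw]
      rw [Finset.sum_mul]
      exact Finset.sum_congr rfl fun ρ _ => by rw [hgs lam σ]; ring
    simp only [h1]
    rw [Finset.sum_comm]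
    have h2 : ∀ ρ, ∑ σ, g lam σ * gi σ ρ * n ρ = (g * gi) lam ρ * n ρ := fun ρ => by
      rw [Matrix.mul_apply, Finset.sum_mul]
    simp only [h2, hgi, Matrix.one_apply]
    simp
  have hRs' : Rs = -2 * S := by
    rw [hRs]
    calc ∑ β, ∑ μ, gi β μ * Ricj β μ
        = ∑ β, ∑ μ, (-(gi β μ * n β * u μ) - gi β μ * n μ * u β
            + (gi β μ * n μ * n β) * T) := by
          refine Finset.sum_congr rfl fun β _ => Finset.sum_congr rfl fun μ _ => ?_
          rw [hRic' β μ]; ring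
      _ = -(∑ β, ∑ μ, gi β μ * n β * u μ) - (∑ β, ∑ μ, gi β μ * n μ * u β)
            + (∑ β, ∑ μ, gi β μ * n μ * n β) * T := by
          simp only [Finset.sum_sub_distrib, Finset.sum_add_distrib,
            Finset.sum_neg_distrib, Finset.sum_mul]
      _ = -2 * S := by rw [c1, c2, c3]; ring
  intro lam
  calc ∑ σ, (∑ ρ, gi σ ρ * n ρ) * Gj σ lam
      = ∑ σ, (-(w σ * n σ * u lam) - (w σ * u σ) * n lam
          + (w σ * n σ) * (n lam * T) + (w σ * g σ lam) * S) := by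
        refine Finset.sum_congr rfl fun σ _ => ?_
        rw [hGj, hRic', hRs']
        simp only [hw]
        ring
    _ = -((∑ σ, w σ * n σ) * u lam) - (∑ σ, w σ * u σ) * n lam
          + (∑ σ, w σ * n σ) * (n lam * T) + (∑ σ, w σ * g σ lam) * S := by
        simp only [Finset.sum_sub_distrib, Finset.sum_add_distrib,
          Finset.sum_neg_distrib, Finset.sum_mul]
    _ = 0 := by rw [hwn, hgw lam, ← hS]; ring
end
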